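/- Suppose for each dimension n ≤ N two filtered complexes K and L have persistence diagrams PD_n(K), PD_n(L) of equal (finite) cardinality, and fix bijections π_n between them. If all Betti curves are given by β_n(K, r) = Σ_{(b,d)∈PD_n(K)} 𝟙_{[b,d)}(r) and χ(K_r) = Σ_{n=0}^{N} (−1)^n β_n(K, r), then ‖χ(K_·) − χ(L_·)‖₁ ≤ 2 Σ_{n=0}^{N} Σ_{(b,d)∈PD_n(K)} ‖(b,d) − π_n(b,d)‖_∞, provided no matched pair (b_K,d_K), (b_L,d_L) satisfies d_K ≤ b_L or d_L ≤ b_K (i.e., matched intervals always overlap or are nested). -/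

import Mathlib

/-!
Pointwise, the difference of the two Euler curves is an alternating sum of differences of
interval indicators, so its absolute value is at most `∑ |𝟙_{[b_K,d_K)} - 𝟙_{[b_L,d_L)}|`.
Each summand is the indicator of the symmetric difference of the two intervals, which lies in
the union of the interval between the births and the interval between the deaths; hence its
integral is at most `|b_K - b_L| + |d_K - d_L| ≤ 2 ‖(b_K,d_K) - (b_L,d_L)‖_∞`.
-/

open MeasureTheory Set

lemma Ico_symmDiff_Ico_subset {α : Type*} [LinearOrder α] (a b c d : α) :
    symmDiff (Ico a b) (Ico c d) ⊆ Ico (min a c) (max a c) ∪ Ico (min b d) (max b d) := by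
  intro r
  simp only [mem_symmDiff, mem_union, mem_Ico, min_le_iff, lt_max_iff, not_and_or, not_le, not_lt]
  grind

lemma integral_abs_indicator_sub_indicator {X : Type*} [MeasurableSpace X] (μ : Measure X)
    {s t : Set X} (hs : MeasurableSet s) (ht : MeasurableSet t) :
    ∫ x, |s.indicator (fun _ => (1 : ℝ)) x - t.indicator (fun _ => (1 : ℝ)) x| ∂μ =
      μ.real (symmDiff s t) := by
  simp_rw [← abs_indicator_symmDiff, abs_of_nonneg (indicator_nonneg (fun _ _ => zero_le_one) _)]
  exact integral_indicator_one (hs.symmDiff ht)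

lemma integral_abs_indicator_Ico_sub_indicator_Ico_le (a b c d : ℝ) :
    ∫ r, |(Ico a b).indicator (fun _ => (1 : ℝ)) r - (Ico c d).indicator (fun _ => (1 : ℝ)) r| ≤
      |a - c| + |b - d| := by
  rw [integral_abs_indicator_sub_indicator volume measurableSet_Ico measurableSet_Ico]
  calc volume.real (symmDiff (Ico a b) (Ico c d))
      ≤ volume.real (Ico (min a c) (max a c) ∪ Ico (min b d) (max b d)) :=
        measureReal_mono (Ico_symmDiff_Ico_subset a b c d)
          (measure_union_lt_top measure_Ico_lt_top measure_Ico_lt_top).ne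
    _ ≤ volume.real (Ico (min a c) (max a c)) + volume.real (Ico (min b d) (max b d)) :=
        measureReal_union_le _ _
    _ = |a - c| + |b - d| := by
        rw [Real.volume_real_Ico_of_le min_le_max, Real.volume_real_Ico_of_le min_le_max,
          max_sub_min_eq_abs', max_sub_min_eq_abs']

lemma abs_alternating_sum_sub_le {R : Type*} [CommRing R] [LinearOrder R] [IsStrictOrderedRing R]
    (s : Finset ℕ) {κ : ℕ → Type*} [∀ n, Fintype (κ n)] (x y : ∀ n, κ n → R) :
    |∑ n ∈ s, (-1) ^ n * ∑ i, x n i - ∑ n ∈ s, (-1) ^ n * ∑ i, y n i| ≤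
      ∑ n ∈ s, ∑ i, |x n i - y n i| := by
  rw [← Finset.sum_sub_distrib]
  refine (Finset.abs_sum_le_sum_abs _ _).trans (Finset.sum_le_sum fun n _ => ?_)
  rw [← mul_sub, abs_mul, abs_pow, abs_neg, abs_one, one_pow, one_mul, ← Finset.sum_sub_distrib]
  exact Finset.abs_sum_le_sum_abs _ _

lemma integral_abs_alternating_sum_sub_le {X : Type*} [MeasurableSpace X] {μ : Measure X}
    (s : Finset ℕ) {κ : ℕ → Type*} [∀ n, Fintype (κ n)] {f g : ∀ n, κ n → X → ℝ}
    (hf : ∀ n i, Integrable (f n i) μ) (hg : ∀ n i, Integrable (g n i) μ) :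
    ∫ x, |∑ n ∈ s, (-1) ^ n * ∑ i, f n i x - ∑ n ∈ s, (-1) ^ n * ∑ i, g n i x| ∂μ ≤
      ∑ n ∈ s, ∑ i, ∫ x, |f n i x - g n i x| ∂μ := by
  have hdiff : ∀ n i, Integrable (fun x => |f n i x - g n i x|) μ :=
    fun n i => ((hf n i).sub (hg n i)).abs
  calc ∫ x, |∑ n ∈ s, (-1) ^ n * ∑ i, f n i x - ∑ n ∈ s, (-1) ^ n * ∑ i, g n i x| ∂μ
      ≤ ∫ x, ∑ n ∈ s, ∑ i, |f n i x - g n i x| ∂μ :=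
        integral_mono_of_nonneg (Filter.Eventually.of_forall fun _ => abs_nonneg _)
          (integrable_finsetSum _ fun n _ => integrable_finsetSum _ fun i _ => hdiff n i)
          (Filter.Eventually.of_forall fun x => abs_alternating_sum_sub_le s (f · · x) (g · · x))
    _ = ∑ n ∈ s, ∑ i, ∫ x, |f n i x - g n i x| ∂μ := by
        rw [integral_finsetSum _ fun n _ => integrable_finsetSum _ fun i _ => hdiff n i]
        simp_rw [integral_finsetSum _ fun i _ => hdiff _ i]

theorem stmt_16_general (N : ℕ) (k : ℕ → ℕ) (PK PL : ∀ n, Fin (k n) → ℝ × ℝ) :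
    (∫ r : ℝ, |(∑ n ∈ Finset.range (N + 1), (-1 : ℝ) ^ n *
          ∑ i, indicator (Ico (PK n i).1 (PK n i).2) (fun _ => (1 : ℝ)) r) -
        ∑ n ∈ Finset.range (N + 1), (-1 : ℝ) ^ n *
          ∑ i, indicator (Ico (PL n i).1 (PL n i).2) (fun _ => (1 : ℝ)) r|) ≤
      2 * ∑ n ∈ Finset.range (N + 1), ∑ i,
        max |(PK n i).1 - (PL n i).1| |(PK n i).2 - (PL n i).2| := by
  have hint : ∀ a b : ℝ, Integrable ((Ico a b).indicator fun _ => (1 : ℝ)) := fun a b =>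
    (integrable_indicator_iff measurableSet_Ico).2 (integrableOn_const measure_Ico_lt_top.ne)
  refine (integral_abs_alternating_sum_sub_le _ (fun n i => hint _ _) fun n i => hint _ _).trans ?_
  rw [Finset.mul_sum]
  gcongr with n _
  rw [Finset.mul_sum]
  gcongr with i _
  calc _ ≤ |(PK n i).1 - (PL n i).1| + |(PK n i).2 - (PL n i).2| :=
        integral_abs_indicator_Ico_sub_indicator_Ico_le _ _ _ _
    _ ≤ 2 * max |(PK n i).1 - (PL n i).1| |(PK n i).2 - (PL n i).2| := by
        rw [two_mul]; exact add_le_add (le_max_left _ _) (le_max_right _ _)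

/-- Slice-wise stability of the Euler Characteristic Curve: if for each dimension `n ≤ N`
the persistence diagrams of `K` and `L` are matched by a bijection (here encoded by a common
index type `Fin (k n)`), the Betti curves are sums of indicators `𝟙_{[b,d)}`, the Euler
curves are the alternating sums of Betti curves, and no matched pair of intervals is disjoint
(neither `d_K ≤ b_L` nor `d_L ≤ b_K`), then the `L¹` distance of the Euler curves is at most
twice the total `ℓ∞` matching cost. -/
theorem stmt_16 (N : ℕ) (k : ℕ → ℕ) (PK PL : ∀ n, Fin (k n) → ℝ × ℝ)
    (hK : ∀ n i, (PK n i).1 ≤ (PK n i).2) (hL : ∀ n i, (PL n i).1 ≤ (PL n i).2)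
    (hoverlap : ∀ n (i : Fin (k n)),
      ¬((PK n i).2 ≤ (PL n i).1) ∧ ¬((PL n i).2 ≤ (PK n i).1)) :
    (∫ r : ℝ, |(∑ n ∈ Finset.range (N + 1), (-1 : ℝ) ^ n *
          ∑ i, indicator (Ico (PK n i).1 (PK n i).2) (fun _ => (1 : ℝ)) r) -
        ∑ n ∈ Finset.range (N + 1), (-1 : ℝ) ^ n *
          ∑ i, indicator (Ico (PL n i).1 (PL n i).2) (fun _ => (1 : ℝ)) r|) ≤
      2 * ∑ n ∈ Finset.range (N + 1), ∑ i,
        max |(PK n i).1 - (PL n i).1| |(PK n i).2 - (PL n i).2| :=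
  stmt_16_general N k PK PL
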